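/- arXiv:2105.01587 — 5 statements merged into one kernel-verified Lean document; each statement's English description precedes it below -/
import Mathlib

section
/- If f: X → ℝ is closed and convex on X = ℝⁿ, then f is γ-strongly convex with respect to a norm ‖·‖ if and only if its Fenchel–Legendre conjugate f* is (1/γ)-Lipschitz smooth with respect to the dual norm. -/
/-!
Strong convexity makes `∇f` surjective (by coercivity), and at a subgradient `u ∈ ∂f(x)` the
Fenchel–Young inequality is an equality, so `∇f* u = x`: thus `∇f*` inverts `∇f`. The
monotonicity `γ N(x - y)² ≤ ⟪∇f x - ∇f y, x - y⟫` together with `⟪x, s⟫ ≤ N x * Nd s` then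
gives the Lipschitz bound on `∇f*`.

Conversely, a `(1/γ)`-Lipschitz `∇f*` yields the quadratic upper bound
`f*(v + d) ≤ f*(v) + ⟪∇f* v, d⟫ + Nd(d)² / (2γ)`. Take `v = ∇f y`, so that `∇f* v = y`, and
`d = γ N(x - y) s` where `s` is a Hahn–Banach dual vector of `x - y` (`⟪x - y, s⟫ = N(x - y)`,
`Nd s ≤ 1`); then `f x ≥ ⟪x, v + d⟫ - f*(v + d)` is the strong convexity inequality.
-/

open RealInnerProductSpace Filter Set InnerProductSpace

variable {E : Type*} [NormedAddCommGroup E] [InnerProductSpace ℝ E]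

def IsDualNorm (N Nd : E → ℝ) : Prop :=
  ∀ s, IsLUB {r | ∃ x, N x ≤ 1 ∧ r = ⟪x, s⟫} (Nd s)

def IsFenchelConjugate (f fstar : E → ℝ) : Prop :=
  ∀ u, IsLUB {r | ∃ x, r = ⟪x, u⟫ - f x} (fstar u)

lemma Seminorm.exists_pos_mul_norm_le [FiniteDimensional ℝ E] (p : Seminorm ℝ E)
    (hp : ∀ x, p x = 0 → x = 0) : ∃ c > 0, ∀ x, c * ‖x‖ ≤ p x := by
  rcases subsingleton_or_nontrivial E with _ | _
  · exact ⟨1, one_pos, fun x => by simp [Subsingleton.elim x 0]⟩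
  obtain ⟨x₀, hx₀, hmin⟩ := (isCompact_sphere (0 : E) 1).exists_isMinOn
    (NormedSpace.sphere_nonempty.mpr zero_le_one)
    p.convexOn.locallyLipschitz.continuous.continuousOn
  rw [mem_sphere_zero_iff_norm] at hx₀
  refine ⟨p x₀, (apply_nonneg p x₀).lt_of_ne fun h => ?_, fun x => ?_⟩
  · simp [hp x₀ h.symm] at hx₀
  rcases eq_or_ne x 0 with rfl | hx
  · simp
  have hxpos := norm_pos_iff.mpr hx
  have hle : p x₀ ≤ p (‖x‖⁻¹ • x) := hmin (by simp [norm_smul, hxpos.ne'])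
  rwa [map_smul_eq_mul, norm_inv, norm_norm, le_inv_mul_iff₀ hxpos, mul_comm] at hle

namespace IsDualNorm

variable {N Nd : E → ℝ}

lemma smul_le (hNd : IsDualNorm N Nd) {c : ℝ} (hc : 0 ≤ c) (s : E) : Nd (c • s) ≤ c * Nd s := by
  refine (hNd (c • s)).2 ?_
  rintro r ⟨x, hx, rfl⟩
  rw [real_inner_smul_right]
  exact mul_le_mul_of_nonneg_left ((hNd s).1 ⟨x, hx, rfl⟩) hc

variable {p : Seminorm ℝ E}

lemma nonneg (hNd : IsDualNorm p Nd) (s : E) : 0 ≤ Nd s :=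
  (hNd s).1 ⟨0, by simp, by simp⟩

lemma inner_le (hNd : IsDualNorm p Nd) (hp : ∀ x, p x = 0 → x = 0) (x s : E) :
    ⟪x, s⟫ ≤ p x * Nd s := by
  rcases (apply_nonneg p x).eq_or_lt with h0 | hpos
  · simp [hp x h0.symm]
  have hunit : p ((p x)⁻¹ • x) ≤ 1 := by
    rw [map_smul_eq_mul, Real.norm_of_nonneg (inv_nonneg.2 hpos.le), inv_mul_cancel₀ hpos.ne']
  have hle := (hNd s).1 ⟨_, hunit, rfl⟩
  rwa [real_inner_smul_left, inv_mul_le_iff₀ hpos] at hle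

/-- Hahn–Banach, extending `c • z ↦ c * p z` from the span of `z`. -/
lemma exists_inner_eq_of_le_one [FiniteDimensional ℝ E] (hNd : IsDualNorm p Nd) (z : E) :
    ∃ s, ⟪z, s⟫ = p z ∧ Nd s ≤ 1 := by
  have hwd : ∀ c : ℝ, c • z = 0 → c • p z = 0 := by
    intro c hc
    have habs : |c| * p z = 0 := by rw [← Real.norm_eq_abs, ← map_smul_eq_mul, hc, map_zero]
    rcases mul_eq_zero.mp habs with h | h
    · simp [abs_eq_zero.mp h]
    · simp [h]
  let φ := LinearPMap.mkSpanSingleton' (σ := RingHom.id ℝ) z (p z) hwd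
  have hφ : ∀ x : φ.domain, φ x ≤ p x := by
    rintro ⟨x, hx⟩
    obtain ⟨c, rfl⟩ := Submodule.mem_span_singleton.mp hx
    rw [LinearPMap.mkSpanSingleton'_apply, map_smul_eq_mul, smul_eq_mul, Real.norm_eq_abs]
    exact mul_le_mul_of_nonneg_right (le_abs_self c) (apply_nonneg p z)
  obtain ⟨g, hgφ, hgp⟩ := exists_extension_of_le_sublinear φ p
    (fun c hc x => by rw [map_smul_eq_mul, Real.norm_of_nonneg hc.le]) (map_add_le_add p) hφ
  let s := (toDual ℝ E).symm (LinearMap.toContinuousLinearMap g)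
  have hs : ∀ x, ⟪x, s⟫ = g x := fun x => by rw [real_inner_comm]; exact toDual_symm_apply
  refine ⟨s, ?_, (hNd s).2 ?_⟩
  · rw [hs, hgφ ⟨z, Submodule.mem_span_singleton_self z⟩]
    exact LinearPMap.mkSpanSingleton'_apply_self z (p z) hwd _
  · rintro r ⟨x, hx, rfl⟩
    exact (hs x).trans_le ((hgp x).trans hx)

end IsDualNorm

section Gradient

variable [CompleteSpace E] {h : E → ℝ}

lemma HasGradientAt.eq_of_forall_sub_inner_le {g a x₀ : E} (hg : HasGradientAt h g a)
    (hmin : ∀ w, h a - ⟪x₀, a⟫ ≤ h w - ⟪x₀, w⟫) : g = x₀ := by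
  have hderiv : HasFDerivAt (fun w => h w - ⟪x₀, w⟫) (toDual ℝ E (g - x₀)) a := by
    rw [map_sub]
    exact hg.hasFDerivAt.sub (toDual ℝ E x₀).hasFDerivAt
  have hzero := IsLocalMin.hasFDerivAt_eq_zero (Eventually.of_forall hmin) hderiv
  exact sub_eq_zero.mp ((toDual ℝ E).map_eq_zero_iff.mp hzero)

lemma HasGradientAt.hasDerivAt_comp_add_smul {g a d : E} {t : ℝ}
    (hg : HasGradientAt h g (a + t • d)) :
    HasDerivAt (fun s : ℝ => h (a + s • d)) ⟪g, d⟫ t := by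
  have hline : HasDerivAt (fun s : ℝ => a + s • d) d t := by
    simpa using ((hasDerivAt_id t).smul_const d).const_add a
  simpa [Function.comp_def] using hg.hasFDerivAt.comp_hasDerivAt t hline

lemma ConvexOn.add_inner_le_of_hasGradientAt (hc : ConvexOn ℝ univ h) {g y : E}
    (hg : HasGradientAt h g y) (x : E) : h y + ⟪g, x - y⟫ ≤ h x := by
  have hline : ConvexOn ℝ univ fun t : ℝ => h (y + t • (x - y)) := by
    simpa [Function.comp_def, AffineMap.lineMap_apply, add_comm] using
      hc.comp_affineMap (AffineMap.lineMap y x)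
  have hd : HasDerivAt (fun t : ℝ => h (y + t • (x - y))) ⟪g, x - y⟫ 0 :=
    HasGradientAt.hasDerivAt_comp_add_smul (by simpa using hg)
  have hslope := hline.le_slope_of_hasDerivAt (mem_univ 0) (mem_univ 1) one_pos hd
  simp only [slope_def_field, zero_smul, add_zero, one_smul, add_sub_cancel] at hslope
  linarith

lemma apply_add_le_of_inner_gradient_sub_le {G : E → E} (hG : ∀ x, HasGradientAt h (G x) x)
    (a d : E) {M : ℝ} (hM : ∀ t ∈ Icc (0 : ℝ) 1, ⟪G (a + t • d) - G a, d⟫ ≤ t * M) :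
    h (a + d) ≤ h a + ⟪G a, d⟫ + M / 2 := by
  let ψ : ℝ → ℝ := fun t => h (a + t • d) - t * ⟪G a, d⟫ - t ^ 2 * M / 2
  have hψ : ∀ t, HasDerivAt ψ (⟪G (a + t • d), d⟫ - ⟪G a, d⟫ - t * M) t := by
    intro t
    have hsq : HasDerivAt (fun t : ℝ => t ^ 2 * M / 2) (t * M) t :=
      ((hasDerivAt_pow 2 t).mul_const M).div_const 2 |>.congr_deriv (by norm_num; ring)
    exact (((hG _).hasDerivAt_comp_add_smul).sub ((hasDerivAt_id t).mul_const _)).sub hsq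
      |>.congr_deriv (by simp)
  have hanti : AntitoneOn ψ (Icc 0 1) := by
    refine antitoneOn_of_hasDerivWithinAt_nonpos (convex_Icc 0 1)
      (fun t _ => (hψ t).continuousAt.continuousWithinAt) (fun t _ => (hψ t).hasDerivWithinAt)
      fun t ht => ?_
    have := hM t (interior_subset ht)
    rw [inner_sub_left] at this
    linarith
  have h01 := hanti (left_mem_Icc.mpr zero_le_one) (right_mem_Icc.mpr zero_le_one) zero_le_one
  simp only [ψ, zero_smul, add_zero, one_smul, zero_mul, one_mul, sub_zero, one_pow] at h01
  norm_num at h01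
  linarith

lemma IsDualNorm.apply_add_le_of_lipschitz_gradient {p : Seminorm ℝ E} {Nd : E → ℝ}
    (hNd : IsDualNorm p Nd) (hp : ∀ x, p x = 0 → x = 0) {G : E → E}
    (hG : ∀ x, HasGradientAt h (G x) x) {L : ℝ} (hL : 0 ≤ L)
    (hlip : ∀ u v, p (G u - G v) ≤ L * Nd (u - v)) (a d : E) :
    h (a + d) ≤ h a + ⟪G a, d⟫ + L / 2 * Nd d ^ 2 := by
  have hbound := apply_add_le_of_inner_gradient_sub_le hG a d (M := L * Nd d ^ 2) fun t ht => by
    have hNdd := hNd.nonneg d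
    calc ⟪G (a + t • d) - G a, d⟫ ≤ p (G (a + t • d) - G a) * Nd d := hNd.inner_le hp _ _
      _ ≤ L * Nd (t • d) * Nd d := by gcongr; simpa using hlip (a + t • d) a
      _ ≤ L * (t * Nd d) * Nd d := by gcongr; exact hNd.smul_le ht.1 d
      _ = t * (L * Nd d ^ 2) := by ring
  linarith

end Gradient

namespace IsFenchelConjugate

variable {f fstar : E → ℝ}

lemma inner_sub_le (hf : IsFenchelConjugate f fstar) (x u : E) : ⟪x, u⟫ - f x ≤ fstar u :=
  (hf u).1 ⟨x, rfl⟩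

/-- Fenchel–Young equality at a subgradient `u ∈ ∂f(x)`. -/
lemma eq_of_subgradient (hf : IsFenchelConjugate f fstar) {u x : E}
    (hsub : ∀ w, f x + ⟪u, w - x⟫ ≤ f w) : fstar u = ⟪x, u⟫ - f x := by
  refine (hf u).unique (IsGreatest.isLUB ⟨⟨x, rfl⟩, ?_⟩)
  rintro r ⟨w, rfl⟩
  have := hsub w
  rw [inner_sub_right] at this
  linarith [real_inner_comm w u, real_inner_comm x u]

lemma gradient_eq_of_subgradient [CompleteSpace E] (hf : IsFenchelConjugate f fstar) {u x g : E}
    (hg : HasGradientAt fstar g u) (hsub : ∀ w, f x + ⟪u, w - x⟫ ≤ f w) : g = x := by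
  refine hg.eq_of_forall_sub_inner_le fun w => ?_
  have := hf.inner_sub_le x w
  rw [hf.eq_of_subgradient hsub]
  linarith

end IsFenchelConjugate

section FiniteDimensional

variable [FiniteDimensional ℝ E]

lemma surjective_of_strongly_convex {f : E → ℝ} {g : E → E} (hg : ∀ x, HasGradientAt f (g x) x)
    {μ : ℝ} (hμ : 0 < μ) (hsc : ∀ x y, μ / 2 * ‖x - y‖ ^ 2 ≤ f x - f y - ⟪g y, x - y⟫) :
    Function.Surjective g := by
  intro u
  let φ : E → ℝ := fun x => f x - ⟪u, x⟫
  have hφ : Continuous φ :=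
    (continuous_iff_continuousAt.2 fun x => (hg x).continuousAt).sub
      (continuous_const.inner continuous_id)
  have hquad : ∀ x, (μ / 2 * ‖x‖ - ‖g 0 - u‖) * ‖x‖ + f 0 ≤ φ x := by
    intro x
    have hsc0 := hsc x 0
    have hcs := neg_le_of_abs_le (abs_real_inner_le_norm (g 0 - u) x)
    simp only [sub_zero] at hsc0
    rw [inner_sub_left] at hcs
    simp only [φ]
    linarith
  have hq : Tendsto (fun r : ℝ => (μ / 2 * r - ‖g 0 - u‖) * r + f 0) atTop atTop := by
    refine tendsto_atTop_add_const_right _ _ (Tendsto.atTop_mul_atTop₀ ?_ tendsto_id)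
    exact tendsto_atTop_add_const_right _ _ (tendsto_id.const_mul_atTop (by positivity))
  have hcoercive : Tendsto φ (cocompact E) atTop :=
    tendsto_atTop_mono hquad (hq.comp tendsto_norm_cocompact_atTop)
  obtain ⟨x, hx⟩ := hφ.exists_forall_le hcoercive
  exact ⟨x, (hg x).eq_of_forall_sub_inner_le hx⟩

variable {p : Seminorm ℝ E} {Nd f fstar : E → ℝ} {gf gfs : E → E} {γ : ℝ}

theorem lipschitz_gradient_conjugate_of_strongly_convex (hp : ∀ x, p x = 0 → x = 0)
    (hNd : IsDualNorm p Nd) (hfstar : IsFenchelConjugate f fstar)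
    (hgf : ∀ x, HasGradientAt f (gf x) x) (hgfs : ∀ u, HasGradientAt fstar (gfs u) u)
    (hγ : 0 < γ) (hsc : ∀ x y, f x - f y - ⟪gf y, x - y⟫ ≥ γ / 2 * p (x - y) ^ 2) (u v : E) :
    p (gfs u - gfs v) ≤ 1 / γ * Nd (u - v) := by
  obtain ⟨c, hc, hpc⟩ := p.exists_pos_mul_norm_le hp
  have hsurj : Function.Surjective gf := by
    refine surjective_of_strongly_convex hgf (μ := γ * c ^ 2) (by positivity) fun x y => ?_
    calc γ * c ^ 2 / 2 * ‖x - y‖ ^ 2 = γ / 2 * (c * ‖x - y‖) ^ 2 := by ring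
      _ ≤ γ / 2 * p (x - y) ^ 2 := by gcongr; exact hpc _
      _ ≤ _ := hsc x y
  have hinv : ∀ u, gf (gfs u) = u := by
    intro u
    obtain ⟨x, rfl⟩ := hsurj u
    rw [hfstar.gradient_eq_of_subgradient (hgfs (gf x)) fun w => ?_]
    have := hsc w x
    nlinarith [sq_nonneg (p (w - x))]
  have hmono : ∀ x y, γ * p (x - y) ^ 2 ≤ ⟪gf x - gf y, x - y⟫ := by
    intro x y
    have hxy := hsc x y
    have hyx := hsc y x
    rw [map_sub_rev, ← neg_sub x y, inner_neg_right] at hyx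
    rw [inner_sub_left]
    linarith
  have hkey : p (gfs u - gfs v) * (γ * p (gfs u - gfs v)) ≤ p (gfs u - gfs v) * Nd (u - v) :=
    calc _ = γ * p (gfs u - gfs v) ^ 2 := by ring
      _ ≤ ⟪u - v, gfs u - gfs v⟫ := by simpa only [hinv] using hmono (gfs u) (gfs v)
      _ = ⟪gfs u - gfs v, u - v⟫ := real_inner_comm _ _
      _ ≤ _ := hNd.inner_le hp _ _
  rw [one_div, inv_mul_eq_div, le_div_iff₀ hγ, mul_comm]
  rcases (apply_nonneg p (gfs u - gfs v)).eq_or_lt with h0 | hpos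
  · simp [← h0, hNd.nonneg]
  · exact le_of_mul_le_mul_left hkey hpos

theorem strongly_convex_of_lipschitz_gradient_conjugate (hp : ∀ x, p x = 0 → x = 0)
    (hNd : IsDualNorm p Nd) (hfstar : IsFenchelConjugate f fstar) (hconv : ConvexOn ℝ univ f)
    (hgf : ∀ x, HasGradientAt f (gf x) x) (hgfs : ∀ u, HasGradientAt fstar (gfs u) u)
    (hγ : 0 < γ) (hsm : ∀ u v, p (gfs u - gfs v) ≤ 1 / γ * Nd (u - v)) (x y : E) :
    f x - f y - ⟪gf y, x - y⟫ ≥ γ / 2 * p (x - y) ^ 2 := by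
  have hsub := hconv.add_inner_le_of_hasGradientAt (hgf y)
  obtain ⟨s, hzs, hs⟩ := hNd.exists_inner_eq_of_le_one (x - y)
  set d := (γ * p (x - y)) • s
  have hNdd : Nd d ^ 2 ≤ (γ * p (x - y)) ^ 2 := by
    have hscale : 0 ≤ γ * p (x - y) := by positivity
    refine pow_le_pow_left₀ (hNd.nonneg d) ((hNd.smul_le hscale s).trans ?_) 2
    exact mul_le_of_le_one_right hscale hs
  have hdescent := hNd.apply_add_le_of_lipschitz_gradient hp hgfs (by positivity) hsm (gf y) d
  rw [hfstar.gradient_eq_of_subgradient (hgfs (gf y)) hsub, hfstar.eq_of_subgradient hsub]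
    at hdescent
  have hyoung := hfstar.inner_sub_le x (gf y + d)
  have hzd : ⟪x - y, d⟫ = γ * p (x - y) ^ 2 := by rw [real_inner_smul_right, hzs]; ring
  have hquad : 1 / γ / 2 * Nd d ^ 2 ≤ γ / 2 * p (x - y) ^ 2 := by
    calc _ ≤ 1 / γ / 2 * (γ * p (x - y)) ^ 2 := by gcongr
      _ = γ / 2 * p (x - y) ^ 2 := by field_simp
  rw [inner_add_right] at hyoung
  rw [inner_sub_left] at hzd
  rw [inner_sub_right]
  linarith [real_inner_comm x (gf y), real_inner_comm y (gf y)]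

end FiniteDimensional

theorem stmt0_general {n : ℕ}
    (f fstar : EuclideanSpace ℝ (Fin n) → ℝ)
    (N Nd : EuclideanSpace ℝ (Fin n) → ℝ)
    (hNzero : ∀ x, N x = 0 ↔ x = 0)
    (hNsmul : ∀ (c : ℝ) (x), N (c • x) = |c| * N x)
    (hNadd : ∀ x y, N (x + y) ≤ N x + N y)
    (hNd : ∀ s, IsLUB {r | ∃ x, N x ≤ 1 ∧ r = ⟪x, s⟫} (Nd s))
    (hfstar : ∀ u, IsLUB {r | ∃ x, r = ⟪x, u⟫ - f x} (fstar u))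
    (hconv : ConvexOn ℝ Set.univ f)
    (gf gfs : EuclideanSpace ℝ (Fin n) → EuclideanSpace ℝ (Fin n))
    (hgf : ∀ x, HasGradientAt f (gf x) x)
    (hgfs : ∀ u, HasGradientAt fstar (gfs u) u)
    (γ : ℝ) (hγ : 0 < γ) :
    (∀ x y, f x - f y - ⟪gf y, x - y⟫ ≥ γ / 2 * (N (x - y)) ^ 2)
      ↔ (∀ u v, N (gfs u - gfs v) ≤ (1 / γ) * Nd (u - v)) := by
  let p : Seminorm ℝ (EuclideanSpace ℝ (Fin n)) :=
    Seminorm.of N hNadd fun c x => by rw [hNsmul, Real.norm_eq_abs]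
  have hp : ∀ x, p x = 0 → x = 0 := fun x => (hNzero x).mp
  exact ⟨lipschitz_gradient_conjugate_of_strongly_convex hp hNd hfstar hgf hgfs hγ,
    strongly_convex_of_lipschitz_gradient_conjugate hp hNd hfstar hconv hgf hgfs hγ⟩

/-- **Kakade–Shalev-Shwartz–Tewari duality**: a closed convex function `f` on `ℝⁿ` is
`γ`-strongly convex w.r.t. a norm `N` iff its Fenchel–Legendre conjugate `fstar` is
`(1/γ)`-Lipschitz smooth w.r.t. the dual norm `Nd`. -/
theorem stmt0 {n : ℕ}
    (f fstar : EuclideanSpace ℝ (Fin n) → ℝ)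
    (N Nd : EuclideanSpace ℝ (Fin n) → ℝ)
    (hN0 : ∀ x, 0 ≤ N x)
    (hNzero : ∀ x, N x = 0 ↔ x = 0)
    (hNsmul : ∀ (c : ℝ) (x), N (c • x) = |c| * N x)
    (hNadd : ∀ x y, N (x + y) ≤ N x + N y)
    (hNd : ∀ s, IsLUB {r | ∃ x, N x ≤ 1 ∧ r = ⟪x, s⟫} (Nd s))
    (hfstar : ∀ u, IsLUB {r | ∃ x, r = ⟪x, u⟫ - f x} (fstar u))
    (hconv : ConvexOn ℝ Set.univ f)
    (hclosed : LowerSemicontinuous f)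
    (gf gfs : EuclideanSpace ℝ (Fin n) → EuclideanSpace ℝ (Fin n))
    (hgf : ∀ x, HasGradientAt f (gf x) x)
    (hgfs : ∀ u, HasGradientAt fstar (gfs u) u)
    (γ : ℝ) (hγ : 0 < γ) :
    (∀ x y, f x - f y - ⟪gf y, x - y⟫ ≥ γ / 2 * (N (x - y)) ^ 2)
      ↔ (∀ u v, N (gfs u - gfs v) ≤ (1 / γ) * Nd (u - v)) :=
  stmt0_general f fstar N Nd hNzero hNsmul hNadd hNd hfstar hconv gf gfs hgf hgfs γ hγ
end

section
/- Let f(x) be continuous and γ-strongly convex with respect to a norm ‖·‖ on a set X, and let A be a matrix. Then φ(u) = max_{x ∈ X} (⟨Ax, u⟩ − f(x)) is (λ_max(AᵀA)/γ)-Lipschitz smooth with respect to the dual norm ‖·‖_*. -/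
/-!
The gradient of `φ` at `u` is `A x_u`, where `x_u` is a maximizer defining `φ u`: the affine
function `w ↦ ⟪A x_u, w⟫ - f x_u` lies below `φ` and touches it at `u`. Strong convexity gives
quadratic growth of `f - ⟪A ·, u⟫` around its minimizer `x_u`; adding this at `x_u` and `x_v`
yields `γ ‖x_u - x_v‖² ≤ ⟪A (x_u - x_v), u - v⟫ ≤ ‖A (x_u - x_v)‖ ‖u - v‖`, and
`‖A d‖² ≤ λ_max(AᵀA) ‖d‖²` turns this into `‖A (x_u - x_v)‖ ≤ λ_max / γ ‖u - v‖`.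
-/

open RealInnerProductSpace Matrix Filter Topology InnerProductSpace

section Gradient

variable {F : Type*} [NormedAddCommGroup F] [InnerProductSpace ℝ F] [CompleteSpace F]
  {φ : F → ℝ}

theorem HasGradientAt.eq_of_affine_minorant {g s u : F} {c : ℝ}
    (hg : HasGradientAt φ g u) (hle : ∀ v, ⟪s, v⟫ - c ≤ φ v) (heq : φ u = ⟪s, u⟫ - c) :
    g = s := by
  have hmin : IsLocalMin (fun v ↦ φ v - ⟪s, v⟫) u :=
    .of_forall fun v ↦ by linarith [hle v]
  have hderiv : HasFDerivAt (fun v ↦ φ v - ⟪s, v⟫) (toDual ℝ F g - toDual ℝ F s) u :=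
    hg.sub (toDual ℝ F s).hasFDerivAt
  exact (toDual ℝ F).injective (sub_eq_zero.1 (hmin.hasFDerivAt_eq_zero hderiv))

theorem exists_isMaxOn_and_eq_of_hasGradientAt {ι : Type*} {X : Set ι} {T : ι → F} {f : ι → ℝ}
    {g : F → F} (hφ : ∀ u, IsGreatest {r | ∃ x ∈ X, r = ⟪T x, u⟫ - f x} (φ u))
    (hg : ∀ u, HasGradientAt φ (g u) u) (u : F) :
    ∃ x ∈ X, IsMaxOn (fun z ↦ ⟪T z, u⟫ - f z) X x ∧ g u = T x := by
  obtain ⟨⟨x, hx, hφx⟩, hle⟩ := hφ u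
  refine ⟨x, hx, fun z hz ↦ (hle ⟨z, hz, rfl⟩).trans_eq hφx, ?_⟩
  exact (hg u).eq_of_affine_minorant (fun w ↦ (hφ w).2 ⟨x, hx, rfl⟩) hφx

end Gradient

section Convexity

variable {E : Type*} [NormedAddCommGroup E] [NormedSpace ℝ E] {X : Set E} {x y : E}

theorem UniformConvexOn.add_le_of_isMinOn {ψ : ℝ → ℝ} {g : E → ℝ} (hg : UniformConvexOn X ψ g)
    (hx : x ∈ X) (hy : y ∈ X) (hmin : IsMinOn g X x) : g x + ψ ‖x - y‖ ≤ g y := by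
  -- compare `x` with the points `(1 - b) • x + b • y` of the segment and let `b → 0`
  have hseg : ∀ b ∈ Set.Ioo (0 : ℝ) 1, g x + (1 - b) * ψ ‖x - y‖ ≤ g y := by
    rintro b ⟨hb0, hb1⟩
    have hconv := hg.2 hx hy (sub_nonneg.2 hb1.le) hb0.le (sub_add_cancel 1 b)
    have hxz : g x ≤ g ((1 - b) • x + b • y) :=
      hmin (hg.1 hx hy (sub_nonneg.2 hb1.le) hb0.le (sub_add_cancel 1 b))
    rw [smul_eq_mul, smul_eq_mul] at hconv
    refine le_of_mul_le_mul_left ?_ hb0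
    nlinarith
  have hlim : Tendsto (fun b : ℝ ↦ g x + (1 - b) * ψ ‖x - y‖) (𝓝[>] 0)
      (𝓝 (g x + ψ ‖x - y‖)) :=
    tendsto_nhdsWithin_of_tendsto_nhds ((Continuous.tendsto' (by fun_prop) 0 _ (by simp)))
  exact le_of_tendsto hlim (eventually_of_mem (Ioo_mem_nhdsGT one_pos) hseg)

theorem StrongConvexOn.sub_linearMap {γ : ℝ} {f : E → ℝ} (hf : StrongConvexOn X γ f)
    (ℓ : E →ₗ[ℝ] ℝ) : StrongConvexOn X γ (fun z ↦ f z - ℓ z) := by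
  have h := hf.sub (ℓ.concaveOn hf.1).uniformConcaveOn_zero
  rwa [add_zero] at h

variable {F : Type*} [NormedAddCommGroup F] [InnerProductSpace ℝ F]

theorem StrongConvexOn.mul_norm_sub_sq_le_inner_of_isMaxOn {γ : ℝ} {f : E → ℝ}
    (hf : StrongConvexOn X γ f) (T : E →ₗ[ℝ] F) {u v : F} (hx : x ∈ X) (hy : y ∈ X)
    (hxu : IsMaxOn (fun z ↦ ⟪T z, u⟫ - f z) X x) (hyv : IsMaxOn (fun z ↦ ⟪T z, v⟫ - f z) X y) :
    γ * ‖x - y‖ ^ 2 ≤ ⟪T (x - y), u - v⟫ := by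
  have hgrowth : ∀ w, ∀ a ∈ X, ∀ b ∈ X, IsMaxOn (fun z ↦ ⟪T z, w⟫ - f z) X a →
      f a - ⟪T a, w⟫ + γ / 2 * ‖a - b‖ ^ 2 ≤ f b - ⟪T b, w⟫ := by
    intro w a ha b hb hmax
    have hsc : StrongConvexOn X γ (fun z ↦ f z - ⟪T z, w⟫) := by
      simpa [real_inner_comm w] using hf.sub_linearMap (innerₛₗ ℝ w ∘ₗ T)
    have hmin : IsMinOn (fun z ↦ f z - ⟪T z, w⟫) X a := fun z hz ↦ by
      have h : ⟪T z, w⟫ - f z ≤ ⟪T a, w⟫ - f a := hmax hz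
      change f a - ⟪T a, w⟫ ≤ f z - ⟪T z, w⟫
      linarith
    exact hsc.add_le_of_isMinOn ha hb hmin
  have hu := hgrowth u x hx y hy hxu
  have hv := hgrowth v y hy x hx hyv
  rw [norm_sub_rev] at hv
  rw [map_sub, inner_sub_left, inner_sub_right, inner_sub_right]
  linarith

end Convexity

section Rayleigh

variable {ι : Type*} [Fintype ι] [DecidableEq ι]

theorem Matrix.IsHermitian.inner_toEuclideanLin_self_le {M : Matrix ι ι ℝ} (hM : M.IsHermitian)
    {c : ℝ} (hc : ∀ i, hM.eigenvalues i ≤ c) (x : EuclideanSpace ℝ ι) :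
    ⟪x, toEuclideanLin M x⟫ ≤ c * ‖x‖ ^ 2 := by
  set b := hM.eigenvectorBasis
  have hsym := isSymmetric_toEuclideanLin_iff.mpr hM
  have happly : ∀ i, toEuclideanLin M (b i) = hM.eigenvalues i • b i := fun i ↦
    (WithLp.ofLp_injective 2) (hM.mulVec_eigenvectorBasis i)
  have hquad : ⟪x, toEuclideanLin M x⟫ = ∑ i, hM.eigenvalues i * ⟪b i, x⟫ ^ 2 := by
    rw [← b.sum_inner_mul_inner]
    refine Finset.sum_congr rfl fun i _ ↦ ?_
    rw [← hsym, happly, real_inner_smul_left, real_inner_comm x]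
    ring
  have hnorm : ‖x‖ ^ 2 = ∑ i, ⟪b i, x⟫ ^ 2 := by
    rw [← real_inner_self_eq_norm_sq, ← b.sum_inner_mul_inner]
    simp only [real_inner_comm x, sq]
  rw [hquad, hnorm, Finset.mul_sum]
  exact Finset.sum_le_sum fun i _ ↦ mul_le_mul_of_nonneg_right (hc i) (sq_nonneg _)

theorem Matrix.norm_toEuclideanLin_sq_le {κ : Type*} [Fintype κ] [DecidableEq κ]
    (A : Matrix κ ι ℝ) (hA : (Aᵀ * A).IsHermitian) {c : ℝ} (hc : ∀ i, hA.eigenvalues i ≤ c)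
    (x : EuclideanSpace ℝ ι) : ‖toEuclideanLin A x‖ ^ 2 ≤ c * ‖x‖ ^ 2 := by
  have h : ‖toEuclideanLin A x‖ ^ 2 = ⟪x, toEuclideanLin (Aᵀ * A) x⟫ := by
    rw [toLpLin_mul_same, ← conjTranspose_eq_transpose_of_trivial,
      toEuclideanLin_conjTranspose_eq_adjoint, LinearMap.comp_apply,
      LinearMap.adjoint_inner_right, real_inner_self_eq_norm_sq]
  exact h ▸ hA.inner_toEuclideanLin_self_le hc x

end Rayleigh

theorem norm_le_div_mul_of_sq_le_of_mul_sq_le_inner {E F : Type*} [NormedAddCommGroup E]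
    [NormedAddCommGroup F] [InnerProductSpace ℝ F] {d : E} {z w : F} {c γ : ℝ} (hc : 0 ≤ c)
    (hγ : 0 < γ) (hz : ‖z‖ ^ 2 ≤ c * ‖d‖ ^ 2) (hd : γ * ‖d‖ ^ 2 ≤ ⟪z, w⟫) :
    ‖z‖ ≤ c / γ * ‖w‖ := by
  have hkey : γ * ‖z‖ ^ 2 ≤ c * (‖z‖ * ‖w‖) := calc
    γ * ‖z‖ ^ 2 ≤ γ * (c * ‖d‖ ^ 2) := by gcongr
    _ = c * (γ * ‖d‖ ^ 2) := by ring
    _ ≤ c * (‖z‖ * ‖w‖) := by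
      gcongr c * ?_
      exact hd.trans (real_inner_le_norm z w)
  rw [div_mul_eq_mul_div, le_div_iff₀ hγ]
  rcases (norm_nonneg z).eq_or_lt with hzero | hpos
  · rw [← hzero, zero_mul]
    positivity
  · nlinarith

theorem stmt1_general {n m : ℕ}
    (X : Set (EuclideanSpace ℝ (Fin n)))
    (f : EuclideanSpace ℝ (Fin n) → ℝ)
    (γ : ℝ) (hγ : 0 < γ) (hsc : StrongConvexOn X γ f)
    (A : Matrix (Fin m) (Fin n) ℝ)
    (hH : (A.transpose * A).IsHermitian)
    (lmax : ℝ) (hlmax : IsGreatest (Set.range hH.eigenvalues) lmax)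
    (φ : EuclideanSpace ℝ (Fin m) → ℝ)
    (hφ : ∀ u, IsGreatest
      {r | ∃ x ∈ X, r = ⟪(WithLp.equiv 2 (Fin m → ℝ)).symm (A.mulVec x), u⟫ - f x} (φ u))
    (gφ : EuclideanSpace ℝ (Fin m) → EuclideanSpace ℝ (Fin m))
    (hgφ : ∀ u, HasGradientAt φ (gφ u) u) :
    ∀ u v, ‖gφ u - gφ v‖ ≤ lmax / γ * ‖u - v‖ := by
  set T := toEuclideanLin A
  change ∀ u, IsGreatest {r | ∃ x ∈ X, r = ⟪T x, u⟫ - f x} (φ u) at hφ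
  have hlmax_nonneg : 0 ≤ lmax := by
    obtain ⟨i, rfl⟩ := hlmax.1
    exact (conjTranspose_eq_transpose_of_trivial A ▸ posSemidef_conjTranspose_mul_self A
      |>.eigenvalues_nonneg i)
  intro u v
  obtain ⟨x, hx, hxu, hgu⟩ := exists_isMaxOn_and_eq_of_hasGradientAt hφ hgφ u
  obtain ⟨y, hy, hyv, hgv⟩ := exists_isMaxOn_and_eq_of_hasGradientAt hφ hgφ v
  rw [hgu, hgv, ← map_sub]
  exact norm_le_div_mul_of_sq_le_of_mul_sq_le_inner hlmax_nonneg hγ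
    (norm_toEuclideanLin_sq_le A hH (fun i ↦ hlmax.2 ⟨i, rfl⟩) (x - y))
    (hsc.mul_norm_sub_sq_le_inner_of_isMaxOn T hx hy hxu hyv)

/-- If `f` is continuous and `γ`-strongly convex on `X`, then
`φ(u) = max_{x ∈ X} (⟨Ax, u⟩ − f(x))` is `(λ_max(AᵀA)/γ)`-Lipschitz smooth
(w.r.t. the Euclidean norm, which is its own dual norm). -/
theorem stmt1 {n m : ℕ}
    (X : Set (EuclideanSpace ℝ (Fin n))) (hX : X.Nonempty) (hXconv : Convex ℝ X)
    (f : EuclideanSpace ℝ (Fin n) → ℝ) (hf : ContinuousOn f X)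
    (γ : ℝ) (hγ : 0 < γ) (hsc : StrongConvexOn X γ f)
    (A : Matrix (Fin m) (Fin n) ℝ)
    (hH : (A.transpose * A).IsHermitian)
    (lmax : ℝ) (hlmax : IsGreatest (Set.range hH.eigenvalues) lmax)
    (φ : EuclideanSpace ℝ (Fin m) → ℝ)
    (hφ : ∀ u, IsGreatest
      {r | ∃ x ∈ X, r = ⟪(WithLp.equiv 2 (Fin m → ℝ)).symm (A.mulVec x), u⟫ - f x} (φ u))
    (gφ : EuclideanSpace ℝ (Fin m) → EuclideanSpace ℝ (Fin m))
    (hgφ : ∀ u, HasGradientAt φ (gφ u) u) :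
    ∀ u v, ‖gφ u - gφ v‖ ≤ lmax / γ * ‖u - v‖ :=
  stmt1_general X f γ hγ hsc A hH lmax hlmax φ hφ gφ hgφ
end

section
/- Let d be the vectorization of a cost matrix C ∈ ℝ₊^{n×n}, A ∈ {0,1}^{2n×n²} the incidence matrix with (Ax) = (π𝟏, πᵀ𝟏) for vectorized transport plan x, and b = (pᵀ, qᵀ)ᵀ for p, q ∈ Δₙ. Then the optimal transport cost satisfies W(p,q) = min_{x ∈ Δ_{n²}} max_{y ∈ [−1,1]^{2n}} ( dᵀx + 2‖d‖_∞ (yᵀAx − bᵀy) ). -/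
/-!
The inner maximum is `cost π + 2‖d‖_∞ ‖Aπ - b‖₁`, which equals `cost π` on couplings, so an optimal
plan attains `W`. Conversely, any nonnegative `π` can be repaired into a coupling at extra cost at
most `‖d‖_∞ ‖Aπ - b‖₁`: shrink each row to mass `min (∑ⱼ πᵢⱼ) pᵢ`, then each column to mass
`min (∑ᵢ πᵢⱼ) qⱼ`. The resulting sub-coupling misses at most `‖Aπ - b‖₁` of mass, which is put back
as the normalised product of its row and column deficits, each unit costing at most `‖d‖_∞`.
-/

open Finset

lemma abs_sign_le_one (x : ℝ) : |(SignType.sign x : ℝ)| ≤ 1 := by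
  cases SignType.sign x <;> simp

lemma sum_mul_le_sum_abs {ι : Type*} [Fintype ι] {y : ι → ℝ} (hy : ∀ i, |y i| ≤ 1)
    (u : ι → ℝ) : ∑ i, y i * u i ≤ ∑ i, |u i| :=
  sum_le_sum fun i _ => calc
    y i * u i ≤ |y i| * |u i| := by rw [← abs_mul]; exact le_abs_self _
    _ ≤ |u i| := mul_le_of_le_one_left (abs_nonneg _) (hy i)

/-- `max_{‖y‖_∞ ≤ 1} yᵀw = ‖w‖₁`, for `w = (u, v)` split into two blocks. -/
lemma isGreatest_add_mul_dual_pairing {ι κ : Type*} [Fintype ι] [Fintype κ] (a : ℝ) {c : ℝ}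
    (hc : 0 ≤ c) (u : ι → ℝ) (v : κ → ℝ) :
    IsGreatest {r | ∃ y₁ : ι → ℝ, ∃ y₂ : κ → ℝ, (∀ i, |y₁ i| ≤ 1) ∧ (∀ j, |y₂ j| ≤ 1) ∧
      r = a + c * ((∑ i, y₁ i * u i) + ∑ j, y₂ j * v j)}
      (a + c * (∑ i, |u i| + ∑ j, |v j|)) := by
  refine ⟨⟨fun i => SignType.sign (u i), fun j => SignType.sign (v j),
    fun i => abs_sign_le_one _, fun j => abs_sign_le_one _, by simp only [sign_mul_self]⟩, ?_⟩
  rintro r ⟨y₁, y₂, hy₁, hy₂, rfl⟩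
  gcongr a + c * ?_
  exact add_le_add (sum_mul_le_sum_abs hy₁ u) (sum_mul_le_sum_abs hy₂ v)

lemma min_one_div_mul {a b : ℝ} (ha : 0 ≤ a) (hb : 0 ≤ b) : min 1 (b / a) * a = min a b := by
  rcases ha.eq_or_lt with rfl | ha
  · simp [hb]
  · rw [min_mul_of_nonneg _ _ ha.le, one_mul, div_mul_cancel₀ _ ha.ne']

lemma sub_min_le_abs_sub {a b c : ℝ} (h : a ≤ b) : a - min a c ≤ |b - c| := by
  have := le_abs_self (b - c)
  have := abs_nonneg (b - c)
  rcases min_cases a c with ⟨h₁, -⟩ | ⟨h₁, -⟩ <;> rw [h₁] <;> linarith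

lemma mul_sum_div_sum {ι : Type*} [Fintype ι] {u : ι → ℝ} (hu : ∀ i, 0 ≤ u i) (i : ι) :
    u i * (∑ k, u k) / ∑ k, u k = u i := by
  rcases (sum_nonneg fun k _ => hu k : 0 ≤ ∑ k, u k).eq_or_lt with h | h
  · rw [(sum_eq_zero_iff_of_nonneg fun k _ => hu k).1 h.symm i (mem_univ i), zero_mul, zero_div]
  · exact mul_div_cancel_right₀ _ h.ne'

lemma exists_le_rowSum_eq_min {ι κ : Type*} [Fintype κ] {π : Matrix ι κ ℝ}
    (hπ : ∀ i j, 0 ≤ π i j) {a : ι → ℝ} (ha : ∀ i, 0 ≤ a i) :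
    ∃ σ : Matrix ι κ ℝ, (∀ i j, 0 ≤ σ i j ∧ σ i j ≤ π i j) ∧
      ∀ i, ∑ j, σ i j = min (∑ j, π i j) (a i) := by
  have hrow : ∀ i, 0 ≤ ∑ j, π i j := fun i => sum_nonneg fun j _ => hπ i j
  set t : ι → ℝ := fun i => min 1 (a i / ∑ j, π i j)
  have ht₀ : ∀ i, 0 ≤ t i := fun i => le_min zero_le_one (div_nonneg (ha i) (hrow i))
  refine ⟨fun i j => t i * π i j, fun i j => ⟨mul_nonneg (ht₀ i) (hπ i j),
    mul_le_of_le_one_left (hπ i j) (min_le_left _ _)⟩, fun i => ?_⟩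
  rw [← mul_sum]
  exact min_one_div_mul (hrow i) (ha i)

lemma exists_le_colSum_eq_min {ι κ : Type*} [Fintype ι] {π : Matrix ι κ ℝ}
    (hπ : ∀ i j, 0 ≤ π i j) {b : κ → ℝ} (hb : ∀ j, 0 ≤ b j) :
    ∃ σ : Matrix ι κ ℝ, (∀ i j, 0 ≤ σ i j ∧ σ i j ≤ π i j) ∧
      ∀ j, ∑ i, σ i j = min (∑ i, π i j) (b j) := by
  obtain ⟨σ, hσ, hcol⟩ := exists_le_rowSum_eq_min (π := π.transpose) (fun j i => hπ i j) hb
  exact ⟨σ.transpose, fun i j => hσ j i, hcol⟩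

section
variable {ι κ : Type*} [Fintype ι] [Fintype κ]

def transportCost (C π : Matrix ι κ ℝ) : ℝ := ∑ i, ∑ j, C i j * π i j

def IsCoupling (p : ι → ℝ) (q : κ → ℝ) (π : Matrix ι κ ℝ) : Prop :=
  (∀ i j, 0 ≤ π i j) ∧ (∀ i, ∑ j, π i j = p i) ∧ (∀ j, ∑ i, π i j = q j)

/-- `‖Ax - b‖₁` for `x` the vectorization of `π` and `b = (p, q)`. -/
def marginalViolation (p : ι → ℝ) (q : κ → ℝ) (π : Matrix ι κ ℝ) : ℝ :=
  ∑ i, |∑ j, π i j - p i| + ∑ j, |∑ i, π i j - q j|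

lemma marginalViolation_nonneg (p : ι → ℝ) (q : κ → ℝ) (π : Matrix ι κ ℝ) :
    0 ≤ marginalViolation p q π := by
  unfold marginalViolation; positivity

lemma IsCoupling.marginalViolation_eq_zero {p : ι → ℝ} {q : κ → ℝ} {π : Matrix ι κ ℝ}
    (h : IsCoupling p q π) : marginalViolation p q π = 0 := by
  simp [marginalViolation, h.2.1, h.2.2]

lemma exists_subcoupling {π : Matrix ι κ ℝ} (hπ : ∀ i j, 0 ≤ π i j) {p : ι → ℝ} {q : κ → ℝ}
    (hp : ∀ i, 0 ≤ p i) (hq : ∀ j, 0 ≤ q j) :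
    ∃ σ : Matrix ι κ ℝ, (∀ i j, 0 ≤ σ i j ∧ σ i j ≤ π i j) ∧ (∀ i, ∑ j, σ i j ≤ p i) ∧
      (∀ j, ∑ i, σ i j ≤ q j) ∧ ∑ i, p i - ∑ i, ∑ j, σ i j ≤ marginalViolation p q π := by
  obtain ⟨ρ, hρ, hρrow⟩ := exists_le_rowSum_eq_min hπ hp
  obtain ⟨σ, hσ, hσcol⟩ := exists_le_colSum_eq_min (fun i j => (hρ i j).1) hq
  have hσrow : ∀ i, ∑ j, σ i j ≤ p i := fun i => calc
    ∑ j, σ i j ≤ ∑ j, ρ i j := sum_le_sum fun j _ => (hσ i j).2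
    _ ≤ p i := (hρrow i).trans_le (min_le_right _ _)
  refine ⟨σ, fun i j => ⟨(hσ i j).1, (hσ i j).2.trans (hρ i j).2⟩, hσrow,
    fun j => (hσcol j).trans_le (min_le_right _ _), ?_⟩
  have hsplit : ∑ i, p i - ∑ i, ∑ j, σ i j =
      ∑ i, (p i - min (p i) (∑ j, π i j)) + ∑ j, (∑ i, ρ i j - min (∑ i, ρ i j) (q j)) := by
    simp only [sum_sub_distrib, min_comm (p _), ← hρrow, ← hσcol]
    rw [sum_comm (f := fun i j => ρ i j), sum_comm (f := fun i j => σ i j)]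
    ring
  rw [hsplit, marginalViolation]
  refine add_le_add (sum_le_sum fun i _ => ?_) (sum_le_sum fun j _ => ?_)
  · rw [abs_sub_comm]
    exact sub_min_le_abs_sub le_rfl
  · exact sub_min_le_abs_sub (sum_le_sum fun i _ => (hρ i j).2)


lemma exists_coupling_cost_le_of_subcoupling {C σ : Matrix ι κ ℝ} {M : ℝ}
    (hCM : ∀ i j, C i j ≤ M) (hσ : ∀ i j, 0 ≤ σ i j) {p : ι → ℝ} {q : κ → ℝ}
    (hrow : ∀ i, ∑ j, σ i j ≤ p i) (hcol : ∀ j, ∑ i, σ i j ≤ q j)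
    (hpq : ∑ i, p i = ∑ j, q j) :
    ∃ π, IsCoupling p q π ∧
      transportCost C π ≤ transportCost C σ + M * (∑ i, p i - ∑ i, ∑ j, σ i j) := by
  set u : ι → ℝ := fun i => p i - ∑ j, σ i j
  set v : κ → ℝ := fun j => q j - ∑ i, σ i j
  have hu : ∀ i, 0 ≤ u i := fun i => sub_nonneg.2 (hrow i)
  have hv : ∀ j, 0 ≤ v j := fun j => sub_nonneg.2 (hcol j)
  set m := ∑ i, u i with hm
  have hvm : ∑ j, v j = m := by
    simp only [m, u, v, sum_sub_distrib, hpq]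
    rw [sum_comm (f := fun i j => σ i j)]
  have hfill : ∀ i j, 0 ≤ u i * v j / m := fun i j =>
    div_nonneg (mul_nonneg (hu i) (hv j)) (sum_nonneg fun i _ => hu i)
  -- If `m = 0` then `u = v = 0`, so the junk value of `/ 0` never matters.
  refine ⟨fun i j => σ i j + u i * v j / m,
    ⟨fun i j => add_nonneg (hσ i j) (hfill i j), fun i => ?_, fun j => ?_⟩, ?_⟩
  · rw [sum_add_distrib, ← sum_div, ← mul_sum, hvm, mul_sum_div_sum hu]
    ring
  · rw [sum_add_distrib, ← sum_div, ← sum_mul, ← hm, mul_comm, ← hvm, mul_sum_div_sum hv]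
    ring
  · have hfill_cost : ∑ i, ∑ j, C i j * (u i * v j / m) ≤ M * m := calc
      ∑ i, ∑ j, C i j * (u i * v j / m) ≤ ∑ i, ∑ j, M * (u i * v j / m) :=
        sum_le_sum fun i _ => sum_le_sum fun j _ =>
          mul_le_mul_of_nonneg_right (hCM i j) (hfill i j)
      _ = M * (m * m / m) := by
        simp only [← mul_sum, ← sum_div, ← sum_mul, ← hm, hvm]
      _ = M * m := by rw [mul_self_div_self]
    simp only [transportCost, mul_add, sum_add_distrib, m, u, sum_sub_distrib] at hfill_cost ⊢
    linarith

theorem exists_coupling_cost_le {C π : Matrix ι κ ℝ} {M : ℝ} (hC : ∀ i j, 0 ≤ C i j)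
    (hCM : ∀ i j, C i j ≤ M) (hM : 0 ≤ M) (hπ : ∀ i j, 0 ≤ π i j) {p : ι → ℝ} {q : κ → ℝ}
    (hp : ∀ i, 0 ≤ p i) (hq : ∀ j, 0 ≤ q j) (hpq : ∑ i, p i = ∑ j, q j) :
    ∃ π', IsCoupling p q π' ∧
      transportCost C π' ≤ transportCost C π + M * marginalViolation p q π := by
  obtain ⟨σ, hσ, hrow, hcol, hdeficit⟩ := exists_subcoupling hπ hp hq
  obtain ⟨π', hπ', hcost⟩ :=
    exists_coupling_cost_le_of_subcoupling hCM (fun i j => (hσ i j).1) hrow hcol hpq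
  have hσπ : transportCost C σ ≤ transportCost C π :=
    sum_le_sum fun i _ => sum_le_sum fun j _ => mul_le_mul_of_nonneg_left (hσ i j).2 (hC i j)
  exact ⟨π', hπ', hcost.trans (add_le_add hσπ (mul_le_mul_of_nonneg_left hdeficit hM))⟩

end

theorem stmt10_general {n : ℕ}
    (C : Matrix (Fin n) (Fin n) ℝ) (hC : ∀ i j, 0 ≤ C i j)
    (dmax : ℝ) (hdmax : IsGreatest {r | ∃ i j, r = C i j} dmax)
    (p q : Fin n → ℝ) (hp : p ∈ stdSimplex ℝ (Fin n)) (hq : q ∈ stdSimplex ℝ (Fin n))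
    (W : ℝ)
    (hW : IsLeast {r | ∃ π : Matrix (Fin n) (Fin n) ℝ,
        (∀ i j, 0 ≤ π i j) ∧ (∀ i, ∑ j, π i j = p i) ∧ (∀ j, ∑ i, π i j = q j) ∧
        r = ∑ i, ∑ j, C i j * π i j} W)
    (val : Matrix (Fin n) (Fin n) ℝ → ℝ)
    (hval : ∀ π : Matrix (Fin n) (Fin n) ℝ, IsGreatest
      {r | ∃ y₁ y₂ : Fin n → ℝ, (∀ i, |y₁ i| ≤ 1) ∧ (∀ j, |y₂ j| ≤ 1) ∧
        r = (∑ i, ∑ j, C i j * π i j) + 2 * dmax *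
          ((∑ i, y₁ i * ((∑ j, π i j) - p i)) + (∑ j, y₂ j * ((∑ i, π i j) - q j)))}
      (val π)) :
    IsLeast {r | ∃ π : Matrix (Fin n) (Fin n) ℝ,
      (∀ i j, 0 ≤ π i j) ∧ (∑ i, ∑ j, π i j) = 1 ∧ r = val π} W := by
  obtain ⟨i₀, j₀, hd₀⟩ := hdmax.1
  have hdmax₀ : 0 ≤ dmax := hd₀ ▸ hC i₀ j₀
  have hCM : ∀ i j, C i j ≤ dmax := fun i j => hdmax.2 ⟨i, j, rfl⟩
  have hval_eq : ∀ π, val π = transportCost C π + 2 * dmax * marginalViolation p q π :=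
    fun π => (hval π).unique (isGreatest_add_mul_dual_pairing _ (by positivity) _ _)
  obtain ⟨π₀, hπ₀, hrow₀, hcol₀, rfl⟩ := hW.1
  refine ⟨⟨π₀, hπ₀, ?_, ?_⟩, ?_⟩
  · simp only [hrow₀, hp.2]
  · rw [hval_eq, IsCoupling.marginalViolation_eq_zero ⟨hπ₀, hrow₀, hcol₀⟩, mul_zero, add_zero]
    rfl
  · rintro _ ⟨π, hπ, -, rfl⟩
    obtain ⟨π', hπ', hcost⟩ :=
      exists_coupling_cost_le hC hCM hdmax₀ hπ hp.1 hq.1 (hp.2.trans hq.2.symm)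
    have hW' : transportCost C π₀ ≤ transportCost C π' :=
      hW.2 ⟨π', hπ'.1, hπ'.2.1, hπ'.2.2, rfl⟩
    show transportCost C π₀ ≤ val π
    rw [hval_eq]
    linarith [mul_nonneg hdmax₀ (marginalViolation_nonneg p q π)]

/-- Saddle-point (exact-penalty) reformulation of optimal transport:
`W(p,q) = min_{x ∈ Δ_{n²}} max_{y ∈ [−1,1]^{2n}} (dᵀx + 2‖d‖_∞(yᵀAx − bᵀy))`,
stated with the transport plan `π` in matrix form (`x` the vectorization of `π`,
`Ax = (π𝟏, πᵀ𝟏)`, `b = (p,q)`, `d` the vectorization of `C`, `‖d‖_∞ = max_{ij} C_{ij}`). -/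
theorem stmt10 {n : ℕ} (hn : 0 < n)
    (C : Matrix (Fin n) (Fin n) ℝ) (hC : ∀ i j, 0 ≤ C i j)
    (dmax : ℝ) (hdmax : IsGreatest {r | ∃ i j, r = C i j} dmax)
    (p q : Fin n → ℝ) (hp : p ∈ stdSimplex ℝ (Fin n)) (hq : q ∈ stdSimplex ℝ (Fin n))
    (W : ℝ)
    (hW : IsLeast {r | ∃ π : Matrix (Fin n) (Fin n) ℝ,
        (∀ i j, 0 ≤ π i j) ∧ (∀ i, ∑ j, π i j = p i) ∧ (∀ j, ∑ i, π i j = q j) ∧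
        r = ∑ i, ∑ j, C i j * π i j} W)
    (val : Matrix (Fin n) (Fin n) ℝ → ℝ)
    (hval : ∀ π : Matrix (Fin n) (Fin n) ℝ, IsGreatest
      {r | ∃ y₁ y₂ : Fin n → ℝ, (∀ i, |y₁ i| ≤ 1) ∧ (∀ j, |y₂ j| ≤ 1) ∧
        r = (∑ i, ∑ j, C i j * π i j) + 2 * dmax *
          ((∑ i, y₁ i * ((∑ j, π i j) - p i)) + (∑ j, y₂ j * ((∑ i, π i j) - q j)))}
      (val π)) :
    IsLeast {r | ∃ π : Matrix (Fin n) (Fin n) ℝ,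
      (∀ i j, 0 ≤ π i j) ∧ (∑ i, ∑ j, π i j) = 1 ∧ r = val π} W :=
  stmt10_general C hC dmax hdmax p q hp hq W hW val hval
end

section
/- The bilinear function f(𝐱,𝐲) = 𝐲ᵀ𝐀𝐱, where 𝐀 = (Â, ℰ) is assembled from m copies of the OT incidence matrix A and a coupling matrix ℰ as in the Wasserstein barycenter saddle-point formulation, satisfies the cross-Lipschitz bound L_{xy} = max_{‖ỹ‖₂ ≤ 1} max_{‖𝐱‖_𝒳 ≤ 1} ⟨𝐀𝐱, ỹ⟩ ≤ √2, where ‖𝐱‖_𝒳 = sqrt(∑_{i=1}^m ‖xᵢ‖₁² + m‖p‖₁²) for 𝐱 = (x₁,…,x_m,p) with xᵢ ∈ Δ_{n²}, p ∈ Δₙ. -/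
/-!
By Cauchy–Schwarz, `⟨𝐀𝐱, ỹ⟩ ≤ ‖ỹ‖₂ ‖𝐀𝐱‖₂`, so it suffices that `‖𝐀𝐱‖₂² ≤ 2`. The `i`-th block of
`𝐀𝐱` consists of the row sums of `πᵢ` minus `p`, and the column sums of `πᵢ`. Since all entries are
nonnegative, the cross term `⟨row sums, p⟩` can be dropped, and the squared `ℓ²`-norm of a
nonnegative vector is at most the square of its `ℓ¹`-norm; hence the `i`-th block has squared norm
at most `2‖πᵢ‖₁² + ‖p‖₁²`, and summing over `i` gives `2 ∑ᵢ ‖πᵢ‖₁² + m‖p‖₁² ≤ 2`.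
-/

open Finset

lemma sum_sub_sq_le_sum_sq_add_sum_sq {ι : Type*} (s : Finset ι) {f g : ι → ℝ}
    (hf : ∀ i ∈ s, 0 ≤ f i) (hg : ∀ i ∈ s, 0 ≤ g i) :
    ∑ i ∈ s, (f i - g i) ^ 2 ≤ ∑ i ∈ s, f i ^ 2 + ∑ i ∈ s, g i ^ 2 := by
  rw [← sum_add_distrib]
  exact sum_le_sum fun i hi => by nlinarith [mul_nonneg (hf i hi) (hg i hi)]

/-- Squared norm of one block `Aπ − (pᵀ, 0ᵀ)ᵀ` of the barycenter operator. -/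
lemma sum_sq_incidence_block_le {α β : Type*} [Fintype α] [Fintype β]
    {π : α → β → ℝ} {p : α → ℝ} (hπ : ∀ a b, 0 ≤ π a b) (hp : ∀ a, 0 ≤ p a) :
    ∑ a, (∑ b, π a b - p a) ^ 2 + ∑ b, (∑ a, π a b) ^ 2
      ≤ 2 * (∑ a, ∑ b, π a b) ^ 2 + (∑ a, p a) ^ 2 := by
  have hrow : ∀ a ∈ (univ : Finset α), 0 ≤ ∑ b, π a b := fun a _ => sum_nonneg fun b _ => hπ a b
  have hcol : ∀ b ∈ (univ : Finset β), 0 ≤ ∑ a, π a b := fun b _ => sum_nonneg fun a _ => hπ a b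
  have hdiff := sum_sub_sq_le_sum_sq_add_sum_sq univ hrow fun a _ => hp a
  have hrows := sum_sq_le_sq_sum_of_nonneg hrow
  have hcols := sum_sq_le_sq_sum_of_nonneg hcol
  have hps := sum_sq_le_sq_sum_of_nonneg (s := univ) fun a _ => hp a
  rw [sum_comm (f := fun b a => π a b)] at hcols
  linarith

lemma sum_blocks_mul_le_sqrt_mul_sqrt {ι α β : Type*} [Fintype ι] [Fintype α] [Fintype β]
    (u f : ι → α → ℝ) (v g : ι → β → ℝ) :
    ∑ i, (∑ a, u i a * f i a + ∑ b, v i b * g i b)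
      ≤ √(∑ i, (∑ a, u i a ^ 2 + ∑ b, v i b ^ 2)) * √(∑ i, (∑ a, f i a ^ 2 + ∑ b, g i b ^ 2)) := by
  let U : ι × (α ⊕ β) → ℝ := fun x => Sum.elim (u x.1) (v x.1) x.2
  let F : ι × (α ⊕ β) → ℝ := fun x => Sum.elim (f x.1) (g x.1) x.2
  have key := Real.sum_mul_le_sqrt_mul_sqrt univ U F
  simpa only [U, F, Fintype.sum_prod_type, Fintype.sum_sum_type, Sum.elim_inl, Sum.elim_inr]
    using key

/-- Cross-Lipschitz bound `L_{xy} ≤ √2` for the bilinear Wasserstein-barycenter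
saddle-point objective `f(𝐱,𝐲) = 𝐲ᵀ𝐀𝐱`: for nonnegative blocks `xᵢ` (matrices `πᵢ`)
and `p` with `∑ᵢ‖xᵢ‖₁² + m‖p‖₁² ≤ 1`, and any `ỹ = (uᵢ, vᵢ)ᵢ` with `‖ỹ‖₂ ≤ 1`,
one has `⟨𝐀𝐱, ỹ⟩ ≤ √2`, where the `i`-th block of `𝐀𝐱` is `Axᵢ − (pᵀ, 0ᵀ)ᵀ`. -/
theorem stmt13 {n m : ℕ}
    (π : Fin m → Matrix (Fin n) (Fin n) ℝ) (p : Fin n → ℝ)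
    (hπ : ∀ i a b, 0 ≤ π i a b) (hp : ∀ a, 0 ≤ p a)
    (hxnorm : (∑ i, (∑ a, ∑ b, π i a b) ^ 2) + m * (∑ a, p a) ^ 2 ≤ 1)
    (u v : Fin m → Fin n → ℝ)
    (hynorm : (∑ i, ((∑ a, (u i a) ^ 2) + (∑ b, (v i b) ^ 2))) ≤ 1) :
    (∑ i, ((∑ a, u i a * ((∑ b, π i a b) - p a)) + (∑ b, v i b * (∑ a, π i a b))))
      ≤ Real.sqrt 2 := by
  have hAx : ∑ i, (∑ a, (∑ b, π i a b - p a) ^ 2 + ∑ b, (∑ a, π i a b) ^ 2) ≤ 2 :=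
    calc _ ≤ ∑ i, (2 * (∑ a, ∑ b, π i a b) ^ 2 + (∑ a, p a) ^ 2) :=
          sum_le_sum fun i _ => sum_sq_incidence_block_le (hπ i) hp
      _ = 2 * ∑ i, (∑ a, ∑ b, π i a b) ^ 2 + m * (∑ a, p a) ^ 2 := by
          rw [sum_add_distrib, ← mul_sum, sum_const, card_univ, Fintype.card_fin, nsmul_eq_mul]
      _ ≤ 2 := by
          have : (0 : ℝ) ≤ m * (∑ a, p a) ^ 2 := by positivity
          linarith
  calc _ ≤ √(∑ i, (∑ a, u i a ^ 2 + ∑ b, v i b ^ 2)) *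
          √(∑ i, (∑ a, (∑ b, π i a b - p a) ^ 2 + ∑ b, (∑ a, π i a b) ^ 2)) :=
        sum_blocks_mul_le_sqrt_mul_sqrt u _ v _
    _ ≤ √1 * √2 := by gcongr
    _ = √2 := by rw [Real.sqrt_one, one_mul]
end

section
/- Let F be γ_F-strongly convex and L_F-Lipschitz smooth on ℝⁿ, A a matrix, and Ψ(y) = max_x (⟨y, Ax − b⟩ − F(x)) the dual objective with minimizer y* restricted to y⁰ + (Ker Aᵀ)^⊥. Then Ψ is L_Ψ-Lipschitz smooth with L_Ψ = λ_max(AᵀA)/γ_F and γ_Ψ-strongly convex on y⁰ + (Ker Aᵀ)^⊥ with γ_Ψ = λ⁺_min(AᵀA)/L_F, and in particular (γ_Ψ/2)‖y⁰ − y*‖₂² ≤ Ψ(y⁰) − Ψ(y*) ≤ (1/(2γ_Ψ))‖∇Ψ(y⁰)‖₂². -/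
/-!
The maximizer `x(y)` in the definition of `Ψ y` satisfies `∇F(x(y)) = Aᵀy`, and the bound
`Ψ z ≥ ⟪z, A x(y) - b⟫ - F (x(y))` shows `∇Ψ(y) = A x(y) - b`. Strong monotonicity of `∇F` makes
`y ↦ x(y)` `(‖A‖ / γ_F)`-Lipschitz, so `∇Ψ` is `(‖A‖² / γ_F)`-Lipschitz, and `‖A‖² ≤ λ_max(AᵀA)`.
Testing the supremum defining `Ψ w` at `x(v) + Aᵀ(w - v) / L_F` and bounding `F` there by the
descent lemma gives `Ψ w ≥ Ψ v + ⟪∇Ψ v, w - v⟫ + ‖Aᵀ(w - v)‖² / (2 L_F)`. On `y⁰ + (Ker Aᵀ)^⊥` the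
differences `w - v` lie in `Range A`, where `‖Aᵀu‖² ≥ λ⁺_min(AᵀA) ‖u‖²`; this is the strong
convexity. The two bounds at `y⁰` are quadratic growth at the minimizer and the
Polyak–Łojasiewicz inequality.
-/

open RealInnerProductSpace Set
open scoped InnerProduct

section GradientInequalities

theorem ConvexOn.apply_sub_le_of_hasFDerivAt {V : Type*} [NormedAddCommGroup V] [NormedSpace ℝ V]
    {f : V → ℝ} {f' : V →L[ℝ] ℝ} {s : Set V} {x y : V} (hf : ConvexOn ℝ s f) (hx : x ∈ s)
    (hy : y ∈ s) (hf' : HasFDerivAt f f' x) : f' (y - x) ≤ f y - f x := by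
  have hline : ConvexOn ℝ (Icc 0 1) (f ∘ (AffineMap.lineMap x y : ℝ →ᵃ[ℝ] V)) :=
    (hf.comp_affineMap _).subset (hf.1.mapsTo_lineMap hx hy) (convex_Icc 0 1)
  have hderiv : HasDerivAt (f ∘ (AffineMap.lineMap x y : ℝ →ᵃ[ℝ] V)) (f' (y - x)) 0 :=
    hf'.comp_hasDerivAt_of_eq (0 : ℝ) (AffineMap.hasDerivAt_lineMap (a := x) (b := y)) (by simp)
  simpa [slope] using hline.le_slope_of_hasDerivAt (left_mem_Icc.2 zero_le_one)
    (right_mem_Icc.2 zero_le_one) zero_lt_one hderiv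

variable {E : Type*} [NormedAddCommGroup E] [InnerProductSpace ℝ E] {f : E → ℝ} {s : Set E}
  {m : ℝ}

theorem strongConvexOn_of_forall_add_inner_add_le (hs : Convex ℝ s) {G : E → E}
    (h : ∀ x ∈ s, ∀ y ∈ s, f x + ⟪G x, y - x⟫ + m / 2 * ‖y - x‖ ^ 2 ≤ f y) :
    StrongConvexOn s m f := by
  refine ⟨hs, fun x hx y hy a b ha hb hab => ?_⟩
  have h1 := h _ (hs hx hy ha hb hab) x hx
  have h2 := h _ (hs hx hy ha hb hab) y hy
  obtain rfl : b = 1 - a := by linarith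
  have hxz : x - (a • x + (1 - a) • y) = (1 - a) • (x - y) := by module
  have hyz : y - (a • x + (1 - a) • y) = (-a) • (x - y) := by module
  rw [hxz, inner_smul_right, norm_smul, mul_pow, Real.norm_eq_abs, sq_abs] at h1
  rw [hyz, inner_smul_right, norm_smul, mul_pow, Real.norm_eq_abs, sq_abs] at h2
  simp only [smul_eq_mul]
  nlinarith [mul_le_mul_of_nonneg_left h1 ha, mul_le_mul_of_nonneg_left h2 hb]

variable [CompleteSpace E] {x y g : E}

theorem HasGradientAt.eq_of_forall_add_inner_le (hg : HasGradientAt f g x) {g' : E}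
    (h : ∀ z, f x + ⟪g', z - x⟫ ≤ f z) : g = g' := by
  have hmin : IsLocalMin (fun z => f z - ⟪g', z⟫) x := by
    refine Filter.Eventually.of_forall fun z => ?_
    have := h z
    rw [inner_sub_right] at this
    show f x - ⟪g', x⟫ ≤ f z - ⟪g', z⟫
    linarith
  have hderiv := (hasGradientAt_iff_hasFDerivAt.1 hg).sub
    (InnerProductSpace.toDual ℝ E g').hasFDerivAt
  rw [← map_sub] at hderiv
  simpa [sub_eq_zero] using hmin.hasFDerivAt_eq_zero hderiv

theorem StrongConvexOn.add_inner_gradient_add_le (hf : StrongConvexOn s m f) (hx : x ∈ s)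
    (hy : y ∈ s) (hg : HasGradientAt f g x) :
    f x + ⟪g, y - x⟫ + m / 2 * ‖y - x‖ ^ 2 ≤ f y := by
  have hderiv := (hasGradientAt_iff_hasFDerivAt.1 hg).sub
    ((hasStrictFDerivAt_norm_sq x).hasFDerivAt.const_mul (m / 2))
  have h := (strongConvexOn_iff_convex.1 hf).apply_sub_le_of_hasFDerivAt hx hy hderiv
  have hnorm : ‖y‖ ^ 2 = ‖x‖ ^ 2 + 2 * ⟪x, y - x⟫ + ‖y - x‖ ^ 2 := by
    rw [← norm_add_sq_real, add_sub_cancel]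
  simp only [sub_apply, InnerProductSpace.toDual_apply_apply, smul_apply, coe_innerSL_apply,
    nsmul_eq_mul, Nat.cast_ofNat, smul_eq_mul] at h
  rw [hnorm] at h
  linarith

theorem StrongConvexOn.mul_norm_sub_le_norm_sub (hf : StrongConvexOn s m f) (hx : x ∈ s)
    (hy : y ∈ s)    {gx gy : E} (hgx : HasGradientAt f gx x) (hgy : HasGradientAt f gy y) :
    m * ‖x - y‖ ≤ ‖gx - gy‖ := by
  have hxy := hf.add_inner_gradient_add_le hx hy hgx
  have hyx := hf.add_inner_gradient_add_le hy hx hgy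
  have hmono : m * ‖x - y‖ ^ 2 ≤ ⟪gx - gy, x - y⟫ := by
    rw [← neg_sub x y, inner_neg_right, norm_neg] at hxy
    rw [inner_sub_left]
    linarith
  rcases (norm_nonneg (x - y)).eq_or_lt with h0 | hpos
  · rw [← h0, mul_zero]; exact norm_nonneg _
  · refine le_of_mul_le_mul_right ?_ hpos
    calc m * ‖x - y‖ * ‖x - y‖ = m * ‖x - y‖ ^ 2 := by ring
      _ ≤ ⟪gx - gy, x - y⟫ := hmono
      _ ≤ ‖gx - gy‖ * ‖x - y‖ := real_inner_le_norm _ _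

theorem StrongConvexOn.mul_sq_norm_sub_le_of_isMinOn (hf : StrongConvexOn s m f)
    (hmin : IsMinOn f s x)    (hx : x ∈ s) (hy : y ∈ s) (hg : HasGradientAt f g x) :
    m / 2 * ‖y - x‖ ^ 2 ≤ f y - f x := by
  have hinner : 0 ≤ ⟪g, y - x⟫ := by
    simpa using hmin.localize.hasFDerivWithinAt_nonneg
      (hasGradientAt_iff_hasFDerivAt.1 hg).hasFDerivWithinAt
      (sub_mem_posTangentConeAt_of_segment_subset (hf.1.segment_subset hx hy))
  linarith [hf.add_inner_gradient_add_le hx hy hg]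

theorem StrongConvexOn.sub_le_sq_norm_gradient (hf : StrongConvexOn s m f) (hm : 0 < m) (hx : x ∈ s)
    (hy : y ∈ s) (hg : HasGradientAt f g x) : f x - f y ≤ 1 / (2 * m) * ‖g‖ ^ 2 := by
  have hsq : 0 ≤ ‖m • (y - x) + g‖ ^ 2 := sq_nonneg _
  rw [norm_add_sq_real, norm_smul, real_inner_smul_left, real_inner_comm,
    Real.norm_of_nonneg hm.le] at hsq
  have hfirst := hf.add_inner_gradient_add_le hx hy hg
  rw [div_mul_eq_mul_div, one_mul, le_div_iff₀ (by positivity)]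
  nlinarith

theorem le_add_inner_gradient_add_of_lipschitz_gradient {L : ℝ} {g : E → E}
    (hg : ∀ z, HasGradientAt f (g z) z) (hL : ∀ z w, ‖g z - g w‖ ≤ L * ‖z - w‖) (x h : E) :
    f (x + h) ≤ f x + ⟪g x, h⟫ + L / 2 * ‖h‖ ^ 2 := by
  set φ : ℝ → ℝ := fun t => f (x + t • h) - t * ⟪g x, h⟫ - L / 2 * t ^ 2 * ‖h‖ ^ 2
  have hφ : ∀ t, HasDerivAt φ (⟪g (x + t • h) - g x, h⟫ - L * t * ‖h‖ ^ 2) t := by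
    intro t
    have hline : HasDerivAt (fun t : ℝ => x + t • h) h t := by
      simpa using ((hasDerivAt_id t).smul_const h).const_add x
    have hcomp := (hasGradientAt_iff_hasFDerivAt.1 (hg (x + t • h))).comp_hasDerivAt t hline
    refine ((hcomp.sub ((hasDerivAt_id t).mul_const ⟪g x, h⟫)).sub
      (((hasDerivAt_pow 2 t).const_mul (L / 2)).mul_const (‖h‖ ^ 2))).congr_deriv ?_
    simp only [InnerProductSpace.toDual_apply_apply, inner_sub_left]
    ring
  have hanti : AntitoneOn φ (Ici 0) := by
    refine antitoneOn_of_hasDerivWithinAt_nonpos (convex_Ici 0)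
      (fun t _ => (hφ t).continuousAt.continuousWithinAt) (fun t _ => (hφ t).hasDerivWithinAt)
      fun t ht => ?_
    rw [interior_Ici, mem_Ioi] at ht
    have hlip : ‖g (x + t • h) - g x‖ ≤ L * t * ‖h‖ := by
      simpa [norm_smul, abs_of_pos ht, mul_assoc] using hL (x + t • h) x
    nlinarith [real_inner_le_norm (g (x + t • h) - g x) h, norm_nonneg h]
  have := hanti self_mem_Ici (mem_Ici.2 zero_le_one) zero_le_one
  simp only [φ] at this
  norm_num at this
  linarith

end GradientInequalities

section ConvexConjugate

variable {E H : Type*} [NormedAddCommGroup E] [InnerProductSpace ℝ E]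
  [NormedAddCommGroup H] [InnerProductSpace ℝ H] [CompleteSpace H]
  {F : E → ℝ} {gF : E → E} {T : E →L[ℝ] H} {b : H} {Ψ : H → ℝ} {gΨ : H → H}

theorem dual_gradient_eq_of_isGreatest
    (hΨ : ∀ y, IsGreatest {r | ∃ x, r = ⟪y, T x - b⟫ - F x} (Ψ y))
    {x : E} {y : H} {g : H} (hg : HasGradientAt Ψ g y) (hx : Ψ y = ⟪y, T x - b⟫ - F x) :
    g = T x - b := by
  refine hg.eq_of_forall_add_inner_le fun z => ?_
  have hz := (hΨ z).2 ⟨x, rfl⟩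
  rw [hx, real_inner_comm (z - y), inner_sub_left]
  linarith

variable [CompleteSpace E]

theorem gradient_eq_adjoint_of_isGreatest
    (hΨ : ∀ y, IsGreatest {r | ∃ x, r = ⟪y, T x - b⟫ - F x} (Ψ y))
    {x : E} {y : H} {g : E} (hg : HasGradientAt F g x) (hx : Ψ y = ⟪y, T x - b⟫ - F x) :
    g = (T†) y := by
  refine hg.eq_of_forall_add_inner_le fun z => ?_
  have hz := (hΨ y).2 ⟨z, rfl⟩
  rw [ContinuousLinearMap.adjoint_inner_left, map_sub]
  simp only [inner_sub_right] at hz hx ⊢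
  linarith

theorem norm_dual_gradient_sub_le
    (hΨ : ∀ y, IsGreatest {r | ∃ x, r = ⟪y, T x - b⟫ - F x} (Ψ y))
    (hgF : ∀ x, HasGradientAt F (gF x) x) (hgΨ : ∀ y, HasGradientAt Ψ (gΨ y) y)
    {γ : ℝ} (hγ : 0 < γ) (hF : StrongConvexOn univ γ F) (u v : H) :
    ‖gΨ u - gΨ v‖ ≤ ‖T‖ ^ 2 / γ * ‖u - v‖ := by
  obtain ⟨xu, hxu⟩ := (hΨ u).1
  obtain ⟨xv, hxv⟩ := (hΨ v).1
  have hprimal : γ * ‖xu - xv‖ ≤ ‖T‖ * ‖u - v‖ := calc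
    γ * ‖xu - xv‖ ≤ ‖gF xu - gF xv‖ :=
      hF.mul_norm_sub_le_norm_sub (mem_univ _) (mem_univ _) (hgF xu) (hgF xv)
    _ = ‖(T†) (u - v)‖ := by
      rw [gradient_eq_adjoint_of_isGreatest hΨ (hgF xu) hxu,
        gradient_eq_adjoint_of_isGreatest hΨ (hgF xv) hxv, map_sub]
    _ ≤ ‖(T†)‖ * ‖u - v‖ := (T†).le_opNorm _
    _ = ‖T‖ * ‖u - v‖ := by rw [LinearIsometryEquiv.norm_map]
  rw [dual_gradient_eq_of_isGreatest hΨ (hgΨ u) hxu, dual_gradient_eq_of_isGreatest hΨ (hgΨ v) hxv,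
    sub_sub_sub_cancel_right, ← map_sub]
  calc ‖T (xu - xv)‖ ≤ ‖T‖ * ‖xu - xv‖ := T.le_opNorm _
    _ ≤ ‖T‖ * (‖T‖ * ‖u - v‖ / γ) := by
      gcongr
      rw [le_div_iff₀ hγ]
      linarith
    _ = ‖T‖ ^ 2 / γ * ‖u - v‖ := by ring

theorem dual_add_inner_gradient_add_le
    (hΨ : ∀ y, IsGreatest {r | ∃ x, r = ⟪y, T x - b⟫ - F x} (Ψ y))
    (hgF : ∀ x, HasGradientAt F (gF x) x) (hgΨ : ∀ y, HasGradientAt Ψ (gΨ y) y)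
    {L : ℝ} (hL : 0 < L) (hsmooth : ∀ x x', ‖gF x - gF x'‖ ≤ L * ‖x - x'‖) (v w : H) :
    Ψ v + ⟪gΨ v, w - v⟫ + 1 / (2 * L) * ‖(T†) (w - v)‖ ^ 2 ≤ Ψ w := by
  obtain ⟨x, hx⟩ := (hΨ v).1
  set e := (T†) (w - v)
  have hdescent := le_add_inner_gradient_add_of_lipschitz_gradient hgF hsmooth x (L⁻¹ • e)
  have hw := (hΨ w).2 ⟨x + L⁻¹ • e, rfl⟩
  rw [gradient_eq_adjoint_of_isGreatest hΨ (hgF x) hx, real_inner_smul_right, norm_smul,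
    mul_pow, Real.norm_of_nonneg (inv_nonneg.2 hL.le)] at hdescent
  have hshift : ⟪w, T (x + L⁻¹ • e) - b⟫ = ⟪w, T x - b⟫ + L⁻¹ * ⟪(T†) w, e⟫ := by
    rw [map_add, map_smul, add_sub_right_comm, inner_add_right, real_inner_smul_right,
      ContinuousLinearMap.adjoint_inner_left]
  have hgain : L⁻¹ * ⟪(T†) w, e⟫ - L⁻¹ * ⟪(T†) v, e⟫ = L⁻¹ * ‖e‖ ^ 2 := by
    rw [← mul_sub, ← inner_sub_left, ← map_sub, real_inner_self_eq_norm_sq]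
  have hlin : Ψ v + ⟪T x - b, w - v⟫ = ⟪w, T x - b⟫ - F x := by
    rw [hx, real_inner_comm (w - v), inner_sub_left]
    ring
  have hcoef : L / 2 * (L⁻¹ ^ 2 * ‖e‖ ^ 2) = L⁻¹ * ‖e‖ ^ 2 - 1 / (2 * L) * ‖e‖ ^ 2 := by
    field_simp
    ring
  rw [dual_gradient_eq_of_isGreatest hΨ (hgΨ v) hx, hlin]
  linarith

end ConvexConjugate

section Spectral

open Matrix

variable {n : Type*} [Fintype n] [DecidableEq n] {M : Matrix n n ℝ}

theorem Matrix.IsHermitian.eigenvectorBasis_repr_toEuclideanLin (hM : M.IsHermitian)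
    (v : EuclideanSpace ℝ n) (i : n) :
    hM.eigenvectorBasis.repr (toEuclideanLin M v) i =
      hM.eigenvalues i * hM.eigenvectorBasis.repr v i := by
  simp only [IsHermitian.eigenvectorBasis, IsHermitian.eigenvalues, IsHermitian.eigenvalues₀,
    OrthonormalBasis.repr_reindex]
  exact LinearMap.IsSymmetric.eigenvectorBasis_apply_self_apply _ _ _ _

theorem Matrix.IsHermitian.inner_toEuclideanLin_self (hM : M.IsHermitian) (v : EuclideanSpace ℝ n) :
    ⟪v, toEuclideanLin M v⟫ = ∑ i, hM.eigenvalues i * hM.eigenvectorBasis.repr v i ^ 2 := by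
  rw [← hM.eigenvectorBasis.repr.inner_map_map, PiLp.inner_apply]
  refine Finset.sum_congr rfl fun i _ => ?_
  simp only [hM.eigenvectorBasis_repr_toEuclideanLin, RCLike.inner_apply, conj_trivial]
  ring

theorem Matrix.IsHermitian.sq_norm_toEuclideanLin (hM : M.IsHermitian) (v : EuclideanSpace ℝ n) :
    ‖toEuclideanLin M v‖ ^ 2 = ∑ i, hM.eigenvalues i ^ 2 * hM.eigenvectorBasis.repr v i ^ 2 := by
  rw [← hM.eigenvectorBasis.repr.norm_map, EuclideanSpace.norm_sq_eq]
  refine Finset.sum_congr rfl fun i _ => ?_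
  rw [hM.eigenvectorBasis_repr_toEuclideanLin, Real.norm_eq_abs, sq_abs]
  ring

end Spectral

section TransposeMul

open Matrix

variable {m n : Type*} [Fintype m] [DecidableEq m] [Fintype n] [DecidableEq n]
  (A : Matrix m n ℝ)

theorem Matrix.adjoint_toEuclideanLin :
    LinearMap.adjoint (toEuclideanLin A) = toEuclideanLin Aᵀ := by
  rw [← toEuclideanLin_conjTranspose_eq_adjoint, conjTranspose_eq_transpose_of_trivial]

theorem Matrix.adjoint_toContinuousLinearMap_toEuclideanLin :
    (LinearMap.toContinuousLinearMap (toEuclideanLin A)).adjoint =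
      LinearMap.toContinuousLinearMap (toEuclideanLin Aᵀ) := by
  rw [← LinearMap.adjoint_toContinuousLinearMap, adjoint_toEuclideanLin]

theorem Matrix.sq_norm_toEuclideanLin (v : EuclideanSpace ℝ n) :
    ‖toEuclideanLin A v‖ ^ 2 = ⟪v, toEuclideanLin (Aᵀ * A) v⟫ := by
  rw [← real_inner_self_eq_norm_sq, ← LinearMap.adjoint_inner_right, adjoint_toEuclideanLin,
    toLpLin_mul (q := 2), LinearMap.comp_apply]

variable {A} (hH : (Aᵀ * A).IsHermitian)

theorem Matrix.sq_norm_toEuclideanLin_le {lmax : ℝ} (hlmax : IsGreatest (range hH.eigenvalues) lmax)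
    (v : EuclideanSpace ℝ n) : ‖toEuclideanLin A v‖ ^ 2 ≤ lmax * ‖v‖ ^ 2 := by
  rw [sq_norm_toEuclideanLin, hH.inner_toEuclideanLin_self,
    ← hH.eigenvectorBasis.sum_sq_inner_right v, Finset.mul_sum]
  refine Finset.sum_le_sum fun i _ => ?_
  rw [OrthonormalBasis.repr_apply_apply]
  exact mul_le_mul_of_nonneg_right (hlmax.2 (mem_range_self i)) (sq_nonneg _)

theorem Matrix.sq_norm_toContinuousLinearMap_toEuclideanLin_le {lmax : ℝ}
    (hlmax : IsGreatest (range hH.eigenvalues) lmax) :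
    ‖LinearMap.toContinuousLinearMap (toEuclideanLin A)‖ ^ 2 ≤ lmax := by
  obtain ⟨j, hj⟩ := hlmax.1
  have hlmax_nonneg : 0 ≤ lmax := hj ▸ eigenvalues_conjTranspose_mul_self_nonneg A j
  have hbound : ‖LinearMap.toContinuousLinearMap (toEuclideanLin A)‖ ≤ √lmax := by
    refine ContinuousLinearMap.opNorm_le_bound _ (Real.sqrt_nonneg _) fun v => ?_
    rw [← pow_le_pow_iff_left₀ (norm_nonneg _) (by positivity) two_ne_zero, mul_pow,
      Real.sq_sqrt hlmax_nonneg]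
    exact sq_norm_toEuclideanLin_le hH hlmax v
  simpa [Real.sq_sqrt hlmax_nonneg] using pow_le_pow_left₀ (norm_nonneg _) hbound 2

theorem Matrix.mul_sq_norm_le_sq_norm_toEuclideanLin_transpose {lmin : ℝ}
    (hlmin : IsLeast {r | r ∈ range hH.eigenvalues ∧ r ≠ 0} lmin) {u : EuclideanSpace ℝ m}
    (hu : u ∈ (LinearMap.ker (toEuclideanLin Aᵀ))ᗮ) :
    lmin * ‖u‖ ^ 2 ≤ ‖toEuclideanLin Aᵀ u‖ ^ 2 := by
  rw [← adjoint_toEuclideanLin, ← LinearMap.orthogonal_range,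
    Submodule.orthogonal_orthogonal] at hu
  obtain ⟨w, rfl⟩ := hu
  rw [← LinearMap.comp_apply, ← toLpLin_mul (q := 2), sq_norm_toEuclideanLin,
    hH.inner_toEuclideanLin_self, hH.sq_norm_toEuclideanLin, Finset.mul_sum]
  refine Finset.sum_le_sum fun i _ => ?_
  rcases eq_or_ne (hH.eigenvalues i) 0 with h0 | h0
  · simp [h0]
  · have hle : lmin ≤ hH.eigenvalues i := hlmin.2 ⟨mem_range_self i, h0⟩
    have hnonneg : 0 ≤ hH.eigenvalues i := eigenvalues_conjTranspose_mul_self_nonneg A i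
    calc lmin * (hH.eigenvalues i * hH.eigenvectorBasis.repr w i ^ 2)
        ≤ hH.eigenvalues i * (hH.eigenvalues i * hH.eigenvectorBasis.repr w i ^ 2) :=
          mul_le_mul_of_nonneg_right hle (mul_nonneg hnonneg (sq_nonneg _))
      _ = hH.eigenvalues i ^ 2 * hH.eigenvectorBasis.repr w i ^ 2 := by ring

end TransposeMul

/-- Dual smoothness/strong convexity: for `F` `γ_F`-strongly convex and `L_F`-Lipschitz
smooth and `Ψ(y) = max_x (⟨y, Ax − b⟩ − F(x))`, `Ψ` is `λ_max(AᵀA)/γ_F`-Lipschitz smooth,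
`λ⁺_min(AᵀA)/L_F`-strongly convex on `y⁰ + (Ker Aᵀ)^⊥`, and
`(γ_Ψ/2)‖y⁰ − y*‖² ≤ Ψ(y⁰) − Ψ(y*) ≤ (1/(2γ_Ψ))‖∇Ψ(y⁰)‖²`. -/
theorem stmt18 {n p : ℕ}
    (F : EuclideanSpace ℝ (Fin n) → ℝ)
    (γF LF : ℝ) (hγF : 0 < γF) (hLF : 0 < LF)
    (hsc : StrongConvexOn Set.univ γF F)
    (gF : EuclideanSpace ℝ (Fin n) → EuclideanSpace ℝ (Fin n))
    (hgF : ∀ x, HasGradientAt F (gF x) x)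
    (hFsmooth : ∀ x y, ‖gF x - gF y‖ ≤ LF * ‖x - y‖)
    (A : Matrix (Fin p) (Fin n) ℝ) (b : EuclideanSpace ℝ (Fin p))
    (hH : (A.transpose * A).IsHermitian)
    (lmax lminpos : ℝ)
    (hlmax : IsGreatest (Set.range hH.eigenvalues) lmax)
    (hlmin : IsLeast {r | r ∈ Set.range hH.eigenvalues ∧ r ≠ 0} lminpos)
    (Ψ : EuclideanSpace ℝ (Fin p) → ℝ)
    (hΨ : ∀ y, IsGreatest {r | ∃ x : EuclideanSpace ℝ (Fin n),
      r = ⟪y, (WithLp.equiv 2 (Fin p → ℝ)).symm (A.mulVec x) - b⟫ - F x} (Ψ y))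
    (gΨ : EuclideanSpace ℝ (Fin p) → EuclideanSpace ℝ (Fin p))
    (hgΨ : ∀ y, HasGradientAt Ψ (gΨ y) y)
    (y0 : EuclideanSpace ℝ (Fin p))
    (S : Set (EuclideanSpace ℝ (Fin p)))
    (hS : S = {y | ∀ v : EuclideanSpace ℝ (Fin p),
      A.transpose.mulVec v = 0 → ⟪y - y0, v⟫ = 0})
    (ystar : EuclideanSpace ℝ (Fin p)) (hystar : ystar ∈ S)
    (hymin : ∀ y ∈ S, Ψ ystar ≤ Ψ y) :
    (∀ u v, ‖gΨ u - gΨ v‖ ≤ lmax / γF * ‖u - v‖)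
    ∧ StrongConvexOn S (lminpos / LF) Ψ
    ∧ (lminpos / LF) / 2 * ‖y0 - ystar‖ ^ 2 ≤ Ψ y0 - Ψ ystar
    ∧ Ψ y0 - Ψ ystar ≤ 1 / (2 * (lminpos / LF)) * ‖gΨ y0‖ ^ 2 := by
  set T := LinearMap.toContinuousLinearMap (Matrix.toEuclideanLin A)
  have hΨT : ∀ y, IsGreatest {r | ∃ x, r = ⟪y, T x - b⟫ - F x} (Ψ y) := hΨ
  set K := (LinearMap.ker (Matrix.toEuclideanLin A.transpose))ᗮ
  have hSK : S = AffineSubspace.mk' y0 K := by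
    ext y
    simp [hS, K, AffineSubspace.mem_mk', Submodule.mem_orthogonal', Matrix.toLpLin_apply]
  have hlmin_pos : 0 < lminpos := by
    obtain ⟨⟨j, hj⟩, hne⟩ := hlmin.1
    exact lt_of_le_of_ne (hj ▸ Matrix.eigenvalues_conjTranspose_mul_self_nonneg A j) hne.symm
  have hfirst : ∀ v ∈ S, ∀ w ∈ S,
      Ψ v + ⟪gΨ v, w - v⟫ + lminpos / LF / 2 * ‖w - v‖ ^ 2 ≤ Ψ w := by
    intro v hv w hw
    have hK : w - v ∈ K := by
      rw [hSK] at hv hw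
      simpa using AffineSubspace.vsub_mem_direction hw hv
    have hdual := dual_add_inner_gradient_add_le hΨT hgF hgΨ hLF hFsmooth v w
    rw [Matrix.adjoint_toContinuousLinearMap_toEuclideanLin,
      LinearMap.coe_toContinuousLinearMap'] at hdual
    have hlow := Matrix.mul_sq_norm_le_sq_norm_toEuclideanLin_transpose hH hlmin hK
    calc Ψ v + ⟪gΨ v, w - v⟫ + lminpos / LF / 2 * ‖w - v‖ ^ 2
        = Ψ v + ⟪gΨ v, w - v⟫ + 1 / (2 * LF) * (lminpos * ‖w - v‖ ^ 2) := by ring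
      _ ≤ Ψ v + ⟪gΨ v, w - v⟫ + 1 / (2 * LF) * ‖Matrix.toEuclideanLin A.transpose (w - v)‖ ^ 2 := by
        gcongr
      _ ≤ Ψ w := hdual
  have hconvex : StrongConvexOn S (lminpos / LF) Ψ :=
    strongConvexOn_of_forall_add_inner_add_le (hSK ▸ (AffineSubspace.mk' y0 K).convex) hfirst
  have hy0 : y0 ∈ S := hSK ▸ AffineSubspace.self_mem_mk' y0 K
  refine ⟨fun u v => ?_, hconvex,
    hconvex.mul_sq_norm_sub_le_of_isMinOn hymin hystar hy0 (hgΨ ystar),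
    hconvex.sub_le_sq_norm_gradient (by positivity) hy0 hystar (hgΨ y0)⟩
  calc ‖gΨ u - gΨ v‖ ≤ ‖T‖ ^ 2 / γF * ‖u - v‖ := norm_dual_gradient_sub_le hΨT hgF hgΨ hγF hsc u v
    _ ≤ lmax / γF * ‖u - v‖ := by
      gcongr
      exact Matrix.sq_norm_toContinuousLinearMap_toEuclideanLin_le hH hlmax
end
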